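/- Let k be a positive even integer and let f be a cusp form of weight k for the full modular group SL₂(ℤ). Define Λ_f(s) = ∫_0^∞ f(iy) · y^{s+(k−1)/2−1} dy. Then this integral converges for every s ∈ ℂ, and the functional equation Λ_f(s) = (−1)^{k/2} · Λ_f(1 − s) holds for all s ∈ ℂ. -/

import Mathlib

open Complex UpperHalfPlane

/-- The restriction of a function on the upper half-plane to the positive imaginary
axis: `atI f y = f(iy)` for `y > 0` (junk value `0` otherwise). -/
noncomputable def atI (f : ℍ → ℂ) (y : ℝ) : ℂ :=
  if h : 0 < y then f ⟨Complex.I * y, by simpa using h⟩ else 0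

/-! For a cusp form `f` of level one, `F y = f (i y)` decays exponentially as `y → ∞`, hence faster
than any power, and invariance under `S : z ↦ -1/z` gives `F (1/y) = (i y)^k F y = (-1)^(k/2) y^k F y`.
So `(F, F)` is a strong FE-pair (`WeakFEPair`) of weight `k` and root number `(-1)^(k/2)`: its
Mellin transform `M` converges everywhere and satisfies `M (k - w) = (-1)^(k/2) M w`. Taking
`w = (1 - s) + (k - 1)/2`, so that `k - w = s + (k - 1)/2`, gives the functional equation. -/

open Manifold MatrixGroups ModularGroup MeasureTheory Set Filter Asymptotics

lemma atI_eqOn_comp_ofComplex (f : ℍ → ℂ) :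
    EqOn (atI f) (fun y : ℝ ↦ (f ∘ ofComplex) (Complex.I * y)) (Ioi 0) := fun y (hy : 0 < y) ↦ by
  rw [atI, dif_pos hy]
  exact congrArg f (ofComplex_apply_of_im_pos _).symm

lemma continuousOn_atI {f : ℍ → ℂ} (hf : MDiff f) : ContinuousOn (atI f) (Ioi 0) :=
  ((UpperHalfPlane.mdifferentiable_iff.mp hf).continuousOn.comp (by fun_prop)
    fun y (hy : 0 < y) ↦ by simpa using hy).congr (atI_eqOn_comp_ofComplex f)

lemma atI_isBigO_atTop {f : ℍ → ℂ} {g : ℝ → ℝ} (hf : f =O[atImInfty] fun τ ↦ g τ.im) :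
    atI f =O[atTop] g := by
  have hI : Tendsto (fun y : ℝ ↦ Complex.I * y) atTop (comap Complex.im atTop) :=
    tendsto_comap_iff.mpr <| tendsto_id.congr fun y ↦ by simp
  refine (hf.comp_tendsto (tendsto_comap_im_ofComplex.comp hI)).congr' ?_ ?_
  · filter_upwards [eventually_gt_atTop 0] with y hy
    exact (atI_eqOn_comp_ofComplex f hy).symm
  · filter_upwards [eventually_gt_atTop 0] with y hy
    simp [ofComplex_apply_of_im_pos (show 0 < (Complex.I * y).im by simpa using hy)]

lemma atI_inv {F : Type*} [FunLike F ℍ ℂ] {Γ : Subgroup SL(2, ℤ)} {k : ℤ}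
    [SlashInvariantFormClass F Γ k] (f : F) (hS : S ∈ Γ) {y : ℝ} (hy : 0 < y) :
    atI f y⁻¹ = (Complex.I * y) ^ k * atI f y := by
  set z : ℍ := ⟨Complex.I * y, by simpa using hy⟩
  have hSz : S • z = ⟨Complex.I * (y⁻¹ : ℝ), by simpa using hy⟩ := by
    rw [modular_S_smul]
    ext
    simp [z, mul_comm]
  rw [atI, atI, dif_pos hy, dif_pos (inv_pos.mpr hy), ← hSz,
    SlashInvariantForm.slash_action_eqn_SL'' f hS z, denom_S]

lemma Complex.I_pow_of_even {k : ℕ} (hk : Even k) : Complex.I ^ k = (-1) ^ (k / 2) := by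
  obtain ⟨m, rfl⟩ := hk
  rw [← two_mul, pow_mul, I_sq, Nat.mul_div_cancel_left m two_pos]

lemma atI_isBigO_rpow_atTop {k : ℤ}
    (f : CuspForm (⊤ : Subgroup SL(2, ℤ)) k) (r : ℝ) :
    atI f =O[atTop] (· ^ r) := by
  have hper : (1 : ℝ) ∈ ((⊤ : Subgroup SL(2, ℤ)) : Subgroup (GL (Fin 2) ℝ)).strictPeriods := by
    simp [← MonoidHom.range_eq_map]
  have hdecay := CuspFormClass.exp_decay_atImInfty f one_pos hper
  simp_rw [div_one, neg_mul (2 : ℝ)] at hdecay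
  exact (atI_isBigO_atTop (g := fun y ↦ Real.exp (-(2 * Real.pi) * y)) hdecay).trans
    (isLittleO_exp_neg_mul_rpow_atTop Real.two_pi_pos r).isBigO

lemma mellin_eq_setIntegral_mul (g : ℝ → ℂ) (s : ℂ) :
    mellin g s = ∫ y in Ioi 0, g y * (y : ℂ) ^ (s - 1) := by
  simp_rw [mellin, smul_eq_mul, mul_comm]

lemma mellinConvergent_iff_integrableOn_mul (g : ℝ → ℂ) (s : ℂ) :
    MellinConvergent g s ↔ IntegrableOn (fun y : ℝ ↦ g y * (y : ℂ) ^ (s - 1)) (Ioi 0) := by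
  simp_rw [MellinConvergent, smul_eq_mul, mul_comm]

section LevelOne

variable {k : ℕ} (hk : 0 < k) (hke : Even k) (f : CuspForm (⊤ : Subgroup SL(2, ℤ)) k)

noncomputable def cuspFormFEPair : WeakFEPair ℂ where
  f := atI f
  g := atI f
  k := k
  ε := (-1) ^ (k / 2)
  f₀ := 0
  g₀ := 0
  hf_int := (continuousOn_atI (ModularFormClass.holo f)).locallyIntegrableOn measurableSet_Ioi
  hg_int := (continuousOn_atI (ModularFormClass.holo f)).locallyIntegrableOn measurableSet_Ioi
  hk := by exact_mod_cast hk
  hε := by simp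
  h_feq y hy := by
    rw [one_div, atI_inv f (Subgroup.mem_top S) hy, zpow_natCast, mul_pow, I_pow_of_even hke,
      Real.rpow_natCast, smul_eq_mul]
    push_cast
    ring
  hf_top r := by simpa only [sub_zero] using atI_isBigO_rpow_atTop f r
  hg_top r := by simpa only [sub_zero] using atI_isBigO_rpow_atTop f r

lemma isStrongFEPair_cuspFormFEPair : IsStrongFEPair (cuspFormFEPair hk hke f) :=
  ⟨rfl, rfl⟩

include hk hke

lemma mellinConvergent_atI (s : ℂ) : MellinConvergent (atI f) s :=
  ((isStrongFEPair_cuspFormFEPair hk hke f).hasMellin s).1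

lemma mellin_atI_weight_sub (s : ℂ) :
    mellin (atI f) (k - s) = (-1) ^ (k / 2) * mellin (atI f) s := by
  have hP := isStrongFEPair_cuspFormFEPair hk hke f
  have hFE := (cuspFormFEPair hk hke f).functional_equation s
  rw [hP.Λ_eq, hP.symm_Λ_eq] at hFE
  simpa [cuspFormFEPair] using hFE

end LevelOne

open MeasureTheory Set in
/-- For a cusp form `f` of positive even weight `k` for `SL₂(ℤ)`, the integral
`Λ_f(s) = ∫_0^∞ f(iy) y^{s+(k-1)/2-1} dy` converges for every `s ∈ ℂ` and satisfies
the functional equation `Λ_f(s) = (-1)^{k/2} Λ_f(1-s)`. -/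
theorem cuspForm_functional_equation (k : ℕ) (hk : 0 < k) (hke : Even k)
    (f : CuspForm (⊤ : Subgroup (Matrix.SpecialLinearGroup (Fin 2) ℤ)) (k : ℤ)) :
    (∀ s : ℂ, IntegrableOn
      (fun y : ℝ => atI ⇑f y * (y : ℂ) ^ (s + ((k : ℂ) - 1) / 2 - 1)) (Ioi (0 : ℝ))) ∧
    ∀ s : ℂ, (∫ y in Ioi (0 : ℝ), atI ⇑f y * (y : ℂ) ^ (s + ((k : ℂ) - 1) / 2 - 1)) =
      (-1 : ℂ) ^ (k / 2) *
        ∫ y in Ioi (0 : ℝ), atI ⇑f y * (y : ℂ) ^ ((1 - s) + ((k : ℂ) - 1) / 2 - 1) := by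
  refine ⟨fun s ↦ (mellinConvergent_iff_integrableOn_mul _ _).mp
    (mellinConvergent_atI hk hke f _), fun s ↦ ?_⟩
  rw [← mellin_eq_setIntegral_mul, ← mellin_eq_setIntegral_mul, ← mellin_atI_weight_sub hk hke f]
  congr 1
  ring
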